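/- arXiv:2204.06413 — 2 statements merged into one kernel-verified Lean document; each statement's English description precedes it below -/
import Mathlib

section
/- Let α ∈ [0,1)^d be totally irrational, and for a finite nonempty connected S ⊆ ℤ^d and a pattern p : S → {0,…,d}, define I_p = ⋂_{n∈S} (W_{p(n)} − α·n) ⊆ ℝ/ℤ, where W₀,…,W_d are the consecutive left-closed right-open intervals of [0,1) with endpoints {0} ∪ {1−α_i : 1 ≤ i ≤ d}. Then I_p is either empty or an interval of ℝ/ℤ. -/
/-- Points of the lattice `ℤ^d`. -/
abbrev Zd (d : ℕ) := Fin d → ℤ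

/-- Occurrences of the pattern `p` (with support `S`) in the configuration `x`. -/
def occs {d : ℕ} {A : Type*} (x : Zd d → A) (S : Finset (Zd d)) (p : Zd d → A) : Set (Zd d) :=
  {n | ∀ s ∈ S, x (n + s) = p s}

/-- `x` and `y` differ on finitely many sites. -/
def IsAsymptoticPair {d : ℕ} {A : Type*} (x y : Zd d → A) : Prop :=
  {v | x v ≠ y v}.Finite

/-- Indistinguishable asymptotic pair. -/
def Indistinguishable {d : ℕ} {A : Type*} (x y : Zd d → A) : Prop :=
  IsAsymptoticPair x y ∧
  ∀ (S : Finset (Zd d)) (p : Zd d → A),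
    (occs x S p \ occs y S p).ncard = (occs y S p \ occs x S p).ncard

/-- The set `F = {0, -e₁, …, -e_d}`. -/
def flipF (d : ℕ) : Finset (Zd d) :=
  insert 0 (Finset.univ.image fun i : Fin d => -(Pi.single i 1 : Zd d))

/-- The flip condition for an asymptotic pair over the alphabet `{0,1,…,d}`. -/
def FlipCondition {d : ℕ} (x y : Zd d → Fin (d + 1)) : Prop :=
  {v | x v ≠ y v} = ↑(flipF d) ∧
  Set.BijOn x ↑(flipF d) Set.univ ∧
  x 0 = 0 ∧
  ∀ n ∈ flipF d, y n = x n - 1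

/-- The language of `x` with support `S`, seen as functions `↥S → A`. -/
def langOn {d : ℕ} {A : Type*} (x : Zd d → A) (S : Finset (Zd d)) : Set (S → A) :=
  {q | ∃ n : Zd d, ∀ s : S, x (n + (s : Zd d)) = q s}

/-- Minkowski difference `F - S` of two finite subsets of `ℤ^d`. -/
def fms {d : ℕ} (F S : Finset (Zd d)) : Finset (Zd d) := Finset.image₂ (· - ·) F S

/-- Nearest-neighbour adjacency on `ℤ^d`. -/
def ZAdj {d : ℕ} (u v : Zd d) : Prop :=
  ∃ i : Fin d, v - u = Pi.single i 1 ∨ u - v = Pi.single i 1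

/-- A finite subset of `ℤ^d` is connected for the nearest-neighbour graph. -/
def FinsetConnected {d : ℕ} (S : Finset (Zd d)) : Prop :=
  ∀ u ∈ S, ∀ v ∈ S, Relation.ReflTransGen (fun a b => ZAdj a b ∧ a ∈ S ∧ b ∈ S) u v

/-- The scalar product `n · α`. -/
def dotA {d : ℕ} (α : Fin d → ℝ) (n : Zd d) : ℝ := ∑ i, (n i : ℝ) * α i

/-- Lower `d`-dimensional Sturmian configuration with slope `α` and intercept `ρ`. -/
noncomputable def sLow {d : ℕ} (α : Fin d → ℝ) (ρ : ℝ) (n : Zd d) : ℤ :=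
  ∑ i, (⌊α i + dotA α n + ρ⌋ - ⌊dotA α n + ρ⌋)

/-- Lower characteristic `d`-dimensional Sturmian configuration with slope `α`. -/
noncomputable def cLow {d : ℕ} (α : Fin d → ℝ) (n : Zd d) : ℤ :=
  ∑ i, (⌊α i + dotA α n⌋ - ⌊dotA α n⌋)

/-- Upper characteristic `d`-dimensional Sturmian configuration with slope `α`. -/
noncomputable def cUp {d : ℕ} (α : Fin d → ℝ) (n : Zd d) : ℤ :=
  ∑ i, (⌈α i + dotA α n⌉ - ⌈dotA α n⌉)

/-- `{1, α₁, …, α_d}` is linearly independent over `ℚ`. -/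
def TotallyIrrational {d : ℕ} (α : Fin d → ℝ) : Prop :=
  ∀ (a : ℚ) (q : Fin d → ℚ), ((a : ℝ) + ∑ i, (q i : ℝ) * α i = 0) → a = 0 ∧ q = 0

/-- The interval `W_i ⊆ ℝ/ℤ` of the partition of `[0,1)` with endpoints
`{0} ∪ {1 - αᵢ}`, described as the set of `t ∈ [0,1)` lying above exactly `i` of the
thresholds `1 - αⱼ`. -/
def Wcirc {d : ℕ} (α : Fin d → ℝ) (i : ℕ) : Set (AddCircle (1 : ℝ)) :=
  (fun t : ℝ => (t : AddCircle (1 : ℝ))) ''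
    {t : ℝ | t ∈ Set.Ico (0 : ℝ) 1 ∧ {j : Fin d | 1 - α j ≤ t}.ncard = i}

namespace IpAux
open Set

noncomputable section

def pj (x : ℝ) : AddCircle (1:ℝ) := (x : AddCircle (1:ℝ))

lemma pj_eq_iff {x y : ℝ} : pj x = pj y ↔ ∃ k : ℤ, x = y + k := by
  unfold pj
  rw [QuotientAddGroup.eq_iff_sub_mem]
  simp only [AddSubgroup.mem_zmultiples_iff, zsmul_eq_mul, mul_one]
  constructor
  · rintro ⟨k, hk⟩; exact ⟨k, by linarith⟩
  · rintro ⟨k, hk⟩; exact ⟨k, by linarith⟩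

lemma no_int_in_Ioo {k : ℤ} (h1 : (-1:ℝ) < k) (h2 : (k:ℝ) < 0) : False := by
  have a1 : (-1 : ℤ) < k := by exact_mod_cast h1
  have a2 : k < 0 := by exact_mod_cast h2
  omega

lemma pj_surj : Function.Surjective pj := fun z => Quotient.exists_rep z

lemma pj_add (x y : ℝ) : pj (x + y) = pj x + pj y := rfl

/-- Membership in an arc. -/
lemma mem_arc {z : AddCircle (1:ℝ)} {a b : ℝ} :
    z ∈ pj '' Ico a b ↔ ∃ x, a ≤ x ∧ x < b ∧ pj x = z := by
  simp [Set.mem_image, Set.mem_Ico, and_assoc]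

/-- Translating an arc. -/
lemma arc_translate (a b c : ℝ) :
    {z : AddCircle (1:ℝ) | z + pj c ∈ pj '' Ico a b} = pj '' Ico (a - c) (b - c) := by
  ext z
  obtain ⟨w, rfl⟩ := pj_surj z
  simp only [Set.mem_setOf_eq, mem_arc, ← pj_add]
  constructor
  · rintro ⟨x, hax, hxb, hx⟩
    obtain ⟨k, hk⟩ := pj_eq_iff.mp hx
    exact ⟨x - c, by linarith, by linarith, pj_eq_iff.mpr ⟨k, by linarith⟩⟩
  · rintro ⟨x, hax, hxb, hx⟩
    obtain ⟨k, hk⟩ := pj_eq_iff.mp hx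
    exact ⟨x + c, by linarith, by linarith, pj_eq_iff.mpr ⟨k, by linarith⟩⟩

/-- If a (nonempty, short) arc is inside another short arc, a lift fits inside a lift. -/
lemma arc_subset_arc {l r s s' : ℝ} (hl : l < r) (hs1 : s' < s + 1)
    (hsub : pj '' Ico l r ⊆ pj '' Ico s s') : ∃ k : ℤ, s + k ≤ l ∧ r ≤ s' + k := by
  have h1 : pj l ∈ pj '' Ico s s' := hsub ⟨l, ⟨le_refl l, hl⟩, rfl⟩
  rw [mem_arc] at h1
  obtain ⟨x, hsx, hxs, hx⟩ := h1
  obtain ⟨k, hk⟩ := pj_eq_iff.mp hx.symm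
  refine ⟨k, by linarith, ?_⟩
  by_contra hcon
  push_neg at hcon
  have h2 : pj (s' + k) ∈ pj '' Ico s s' :=
    hsub ⟨s' + k, ⟨by linarith, hcon⟩, rfl⟩
  rw [mem_arc] at h2
  obtain ⟨y, hsy, hys, hy⟩ := h2
  obtain ⟨k', hk'⟩ := pj_eq_iff.mp hy
  exact no_int_in_Ioo (k := k + k') (by push_cast; linarith) (by push_cast; linarith)

/-- Intersection of two short arcs, under the no-two-pieces hypothesis. -/
lemma arc_inter {l r u v : ℝ} (hlr : l ≤ r) (hr1 : r ≤ l + 1) (huv : u ≤ v)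
    (H : ¬ ∃ k : ℤ, l < v + k ∧ u + (k:ℝ) + 1 < r) :
    ∃ l' r', l' ≤ r' ∧ r' ≤ l' + 1 ∧
      (pj '' Ico l r) ∩ (pj '' Ico u v) = pj '' Ico l' r' := by
  have piece : ∀ z, z ∈ (pj '' Ico l r) ∩ (pj '' Ico u v) →
      ∃ k : ℤ, ∃ x, (l ≤ x ∧ x < r) ∧ (u + k ≤ x ∧ x < v + k) ∧ pj x = z := by
    rintro z ⟨hz1, hz2⟩
    rw [mem_arc] at hz1 hz2
    obtain ⟨x, hlx, hxr, rfl⟩ := hz1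
    obtain ⟨y, huy, hyv, hy⟩ := hz2
    obtain ⟨k, hk⟩ := pj_eq_iff.mp hy
    exact ⟨-k, x, ⟨hlx, hxr⟩, ⟨by push_cast; linarith, by push_cast; linarith⟩, rfl⟩
  by_cases h : ∃ k : ℤ, ∃ x, (l ≤ x ∧ x < r) ∧ (u + (k:ℝ) ≤ x ∧ x < v + k)
  · obtain ⟨k₀, x₀, ⟨hl0, hr0⟩, ⟨hu0, hv0⟩⟩ := h
    have hml : l ≤ max l (u + (k₀:ℝ)) := le_max_left _ _
    have hmu : u + (k₀:ℝ) ≤ max l (u + (k₀:ℝ)) := le_max_right _ _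
    have hmr : min r (v + (k₀:ℝ)) ≤ r := min_le_left _ _
    have hmv : min r (v + (k₀:ℝ)) ≤ v + k₀ := min_le_right _ _
    have hl'r' : max l (u + (k₀:ℝ)) ≤ min r (v + (k₀:ℝ)) :=
      le_trans (max_le hl0 hu0) (le_of_lt (lt_min hr0 hv0))
    refine ⟨max l (u + (k₀:ℝ)), min r (v + (k₀:ℝ)), hl'r', by linarith, ?_⟩
    ext z
    constructor
    · intro hz
      obtain ⟨k, x, ⟨h1, h2⟩, ⟨h3, h4⟩, hpx⟩ := piece z hz
      have hkk : k = k₀ := by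
        by_contra hne
        rcases lt_or_gt_of_ne hne with hlt | hgt
        · have hc : (k:ℝ) + 1 ≤ (k₀:ℝ) := by exact_mod_cast Int.add_one_le_iff.mpr hlt
          exact H ⟨k, by linarith, by linarith⟩
        · have hc : (k₀:ℝ) + 1 ≤ (k:ℝ) := by exact_mod_cast Int.add_one_le_iff.mpr hgt
          exact H ⟨k₀, by linarith, by linarith⟩
      subst hkk
      exact ⟨x, ⟨max_le h1 h3, lt_min h2 h4⟩, hpx⟩
    · rintro ⟨x, ⟨hx1, hx2⟩, rfl⟩
      constructor
      · exact ⟨x, ⟨le_trans hml hx1, lt_of_lt_of_le hx2 hmr⟩, rfl⟩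
      · refine ⟨x - k₀, ⟨by linarith [le_trans hmu hx1], by linarith [lt_of_lt_of_le hx2 hmv]⟩, ?_⟩
        exact pj_eq_iff.mpr ⟨-k₀, by push_cast; linarith⟩
  · refine ⟨0, 0, le_refl _, by linarith, ?_⟩
    rw [Set.Ico_self, Set.image_empty]
    ext z
    simp only [Set.mem_empty_iff_false, iff_false]
    intro hz
    obtain ⟨k, x, ⟨h1, h2⟩, ⟨h3, h4⟩, _⟩ := piece z hz
    exact h ⟨k, x, ⟨h1, h2⟩, ⟨h3, h4⟩⟩


section Graph

lemma zadj_symm {d : ℕ} {a b : Zd d} (h : ZAdj a b) : ZAdj b a := by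
  obtain ⟨i, h | h⟩ := h
  · exact ⟨i, Or.inr h⟩
  · exact ⟨i, Or.inl h⟩

variable {X : Type*}

def stepsN (R : X → X → Prop) (u : X) : ℕ → X → Prop
  | 0, v => v = u
  | n+1, v => ∃ w, stepsN R u n w ∧ R w v

lemma stepsN_of_rtg {R : X → X → Prop} {u v : X} (h : Relation.ReflTransGen R u v) :
    ∃ n, stepsN R u n v := by
  induction h with
  | refl => exact ⟨0, rfl⟩
  | tail _ hbc ih => obtain ⟨n, hn⟩ := ih; exact ⟨n + 1, _, hn, hbc⟩

lemma exists_leaf {d : ℕ} (S : Finset (Zd d)) (hconn : FinsetConnected S)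
    (h2 : 2 ≤ S.card) :
    ∃ v₀ ∈ S, (S.erase v₀).Nonempty ∧ FinsetConnected (S.erase v₀) ∧
      ∃ m ∈ S.erase v₀, ZAdj m v₀ := by
  classical
  obtain ⟨u, hu⟩ := Finset.card_pos.mp (by omega : 0 < S.card)
  set R : Zd d → Zd d → Prop := fun a b => ZAdj a b ∧ a ∈ S ∧ b ∈ S with hR
  have hex : ∀ v ∈ S, ∃ n, stepsN R u n v := fun v hv => stepsN_of_rtg (hconn u hu v hv)
  set dist : Zd d → ℕ := fun v => if h : ∃ n, stepsN R u n v then Nat.find h else 0 with hdist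
  have hdist_spec : ∀ v ∈ S, stepsN R u (dist v) v := by
    intro v hv
    have h := hex v hv
    simp only [hdist, dif_pos h]
    exact Nat.find_spec h
  have hdist_min : ∀ v (n : ℕ), stepsN R u n v → dist v ≤ n := by
    intro v n hn
    have h : ∃ n, stepsN R u n v := ⟨n, hn⟩
    simp only [hdist, dif_pos h]
    exact Nat.find_min' h hn
  obtain ⟨v₀, hv₀S, hmax⟩ := S.exists_max_image dist ⟨u, hu⟩
  have hdu : dist u = 0 := Nat.le_zero.mp (hdist_min u 0 rfl)
  have h1 : 1 ≤ dist v₀ := by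
    obtain ⟨w, hw⟩ := Finset.card_pos.mp
      (show 0 < (S.erase u).card by rw [Finset.card_erase_of_mem hu]; omega)
    have hwS : w ∈ S := Finset.mem_of_mem_erase hw
    have hwne : w ≠ u := Finset.ne_of_mem_erase hw
    have hd0 : dist w ≠ 0 := by
      intro h0
      have hs := hdist_spec w hwS
      rw [h0] at hs
      exact hwne hs
    have := hmax w hwS
    omega
  have hv₀u : v₀ ≠ u := fun h => by rw [h, hdu] at h1; omega
  set R' : Zd d → Zd d → Prop :=
    fun a b => ZAdj a b ∧ a ∈ S.erase v₀ ∧ b ∈ S.erase v₀ with hR'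
  have reach : ∀ n, ∀ v ∈ S, v ≠ v₀ → dist v = n → Relation.ReflTransGen R' u v := by
    intro n
    induction n using Nat.strong_induction_on with
    | _ n ih =>
      intro v hv hvne hdn
      cases n with
      | zero =>
        have hs := hdist_spec v hv
        rw [hdn] at hs
        rw [hs]
      | succ n =>
        have hst := hdist_spec v hv
        rw [hdn] at hst
        obtain ⟨w, hw, hRwv⟩ := hst
        have hwS : w ∈ S := hRwv.2.1
        have hdw : dist w ≤ n := hdist_min w n hw
        have hwv₀ : w ≠ v₀ := by
          intro h
          rw [h] at hdw
          have := hmax v hv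
          omega
        have ihw := ih (dist w) (by omega) w hwS hwv₀ rfl
        exact ihw.tail
          ⟨hRwv.1, Finset.mem_erase.mpr ⟨hwv₀, hwS⟩, Finset.mem_erase.mpr ⟨hvne, hv⟩⟩
  have hsym : Symmetric R' := by
    rintro x y ⟨hadj, hx, hy⟩
    exact ⟨zadj_symm hadj, hy, hx⟩
  have hconn' : FinsetConnected (S.erase v₀) := by
    intro a ha b hb
    have hau : Relation.ReflTransGen R' u a :=
      reach (dist a) a (Finset.mem_of_mem_erase ha) (Finset.ne_of_mem_erase ha) rfl
    have hbu : Relation.ReflTransGen R' u b :=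
      reach (dist b) b (Finset.mem_of_mem_erase hb) (Finset.ne_of_mem_erase hb) rfl
    exact (by haveI : Std.Symm R' := ⟨fun _ _ h => hsym h⟩; exact Relation.ReflTransGen.symmetric.symm _ _ hau : Relation.ReflTransGen R' a u).trans hbu
  have hst := hdist_spec v₀ hv₀S
  obtain ⟨n, hn⟩ : ∃ n, dist v₀ = n + 1 := ⟨dist v₀ - 1, by omega⟩
  rw [hn] at hst
  obtain ⟨w, hw, hRwv⟩ := hst
  have hwS : w ∈ S := hRwv.2.1
  have hwv₀ : w ≠ v₀ := by
    intro h
    rw [h] at hw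
    have := hdist_min v₀ n hw
    omega
  exact ⟨v₀, hv₀S, ⟨w, Finset.mem_erase.mpr ⟨hwv₀, hwS⟩⟩, hconn',
    w, Finset.mem_erase.mpr ⟨hwv₀, hwS⟩, hRwv.1⟩

end Graph


section Thr

variable {d : ℕ} {α : Fin d → ℝ}

def thr (α : Fin d → ℝ) : Finset ℝ := Finset.univ.image (fun j => 1 - α j)

def tt (α : Fin d → ℝ) (hc : (thr α).card = d) : ℕ → ℝ := fun i =>
  if h0 : i = 0 then 0
  else if h : i ≤ d then (((thr α).orderIsoOfFin hc) ⟨i - 1, by omega⟩ : ℝ)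
  else 1

variable (hc : (thr α).card = d)

lemma tt_zero : tt α hc 0 = 0 := by simp [tt]

lemma tt_top {i : ℕ} (h : d < i) : tt α hc i = 1 := by
  rw [tt, dif_neg (by omega), dif_neg (by omega)]

lemma tt_mem {i : ℕ} (h1 : 1 ≤ i) (h2 : i ≤ d) : tt α hc i ∈ thr α := by
  rw [tt, dif_neg (by omega), dif_pos h2]
  exact (((thr α).orderIsoOfFin hc) ⟨i - 1, by omega⟩).2

lemma tt_surj {θ : ℝ} (hθ : θ ∈ thr α) :
    ∃ i, 1 ≤ i ∧ i ≤ d ∧ tt α hc i = θ := by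
  set r := ((thr α).orderIsoOfFin hc).symm ⟨θ, hθ⟩ with hr
  refine ⟨r.val + 1, by omega, by omega, ?_⟩
  rw [tt, dif_neg (by omega), dif_pos (by omega)]
  have : (⟨r.val + 1 - 1, by omega⟩ : Fin d) = r := by
    apply Fin.ext; simp
  rw [this, hr, OrderIso.apply_symm_apply]

lemma tt_eq {i : ℕ} (h1 : 1 ≤ i) (h2 : i ≤ d) :
    tt α hc i = (((thr α).orderIsoOfFin hc) ⟨i - 1, by omega⟩ : ℝ) := by
  rw [tt, dif_neg (by omega), dif_pos h2]

lemma tt_succ_eq {i : ℕ} (h : i < d) :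
    tt α hc (i + 1) = (((thr α).orderIsoOfFin hc) ⟨i, h⟩ : ℝ) := by
  rw [tt, dif_neg (by omega), dif_pos (by omega)]
  congr

lemma tt_nonneg (hT : ∀ θ ∈ thr α, 0 < θ ∧ θ < 1) (i : ℕ) : 0 ≤ tt α hc i := by
  rw [tt]
  split
  · exact le_refl 0
  · split
    · exact (hT _ (((thr α).orderIsoOfFin hc) _).2).1.le
    · exact zero_le_one

lemma tt_le_one (hT : ∀ θ ∈ thr α, 0 < θ ∧ θ < 1) (i : ℕ) : tt α hc i ≤ 1 := by
  rw [tt]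
  split
  · exact zero_le_one
  · split
    · exact (hT _ (((thr α).orderIsoOfFin hc) _).2).2.le
    · exact le_refl 1

lemma tt_mono (hT : ∀ θ ∈ thr α, 0 < θ ∧ θ < 1) {i k : ℕ} (hik : i ≤ k) : tt α hc i ≤ tt α hc k := by
  rcases Nat.eq_zero_or_pos i with h0 | h0
  · rw [h0, tt_zero]; exact tt_nonneg hc hT k
  rcases le_or_gt k d with hkd | hkd
  · rw [tt_eq hc (by omega) (by omega), tt_eq hc (by omega) hkd]
    exact Subtype.coe_le_coe.mpr
      (((thr α).orderIsoOfFin hc).le_iff_le.mpr (by simp [Fin.mk_le_mk, Fin.le_def]; omega))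
  · rw [tt_top hc hkd]; exact tt_le_one hc hT i

lemma no_between (hT : ∀ θ ∈ thr α, 0 < θ ∧ θ < 1) {θ : ℝ} (hθ : θ ∈ thr α) {c : ℕ} :
    ¬ (tt α hc c < θ ∧ θ < tt α hc (c + 1)) := by
  rintro ⟨h1, h2⟩
  obtain ⟨i, hi1, hi2, hieq⟩ := tt_surj hc hθ
  rcases le_or_gt i c with h | h
  · exact absurd (hieq ▸ tt_mono hc hT h) (not_le.mpr h1)
  · exact absurd (hieq ▸ tt_mono hc hT (by omega : c + 1 ≤ i)) (not_le.mpr h2)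

lemma card_filter_val_lt {i : ℕ} (hi : i ≤ d) :
    (Finset.univ.filter fun r : Fin d => r.val < i).card = i := by
  apply Finset.card_eq_of_bijective (fun a ha => (⟨a, lt_of_lt_of_le ha hi⟩ : Fin d))
  · intro b hb
    exact ⟨b.val, (Finset.mem_filter.mp hb).2, rfl⟩
  · intro a ha
    exact Finset.mem_filter.mpr ⟨Finset.mem_univ _, ha⟩
  · intro a a' ha ha' h
    exact Fin.mk.inj_iff.mp h

lemma Wchar (hinj : Function.Injective (fun j : Fin d => 1 - α j))
    {x : ℝ} (hx0 : 0 ≤ x) (hx1 : x < 1) {i : ℕ} (hi : i ≤ d) :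
    ({j : Fin d | 1 - α j ≤ x}.ncard = i) ↔
      (tt α hc i ≤ x ∧ x < tt α hc (i + 1)) := by
  classical
  set iso := (thr α).orderIsoOfFin hc with hiso
  set G : Finset (Fin d) := Finset.univ.filter (fun r => ((iso r : ℝ) ≤ x)) with hG
  have hisoinj : Function.Injective (fun r : Fin d => (iso r : ℝ)) := by
    intro a b hab
    exact iso.injective (Subtype.ext hab)
  have hcard : {j : Fin d | 1 - α j ≤ x}.ncard = G.card := by
    have e1 : {j : Fin d | 1 - α j ≤ x} =
        ↑(Finset.univ.filter fun j : Fin d => 1 - α j ≤ x) := by ext j; simp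
    rw [e1, Set.ncard_coe_finset]
    have e2 : ((thr α).filter (· ≤ x)) =
        (Finset.univ.filter fun j : Fin d => 1 - α j ≤ x).image (fun j => 1 - α j) := by
      ext θ
      simp only [Finset.mem_filter, Finset.mem_image, thr, Finset.mem_univ, true_and]
      constructor
      · rintro ⟨⟨j, hj⟩, hθx⟩; exact ⟨j, by rw [hj]; exact hj ▸ hθx, hj⟩
      · rintro ⟨j, hjx, hj⟩; exact ⟨⟨j, hj⟩, hj ▸ hjx⟩
    have e3 : ((thr α).filter (· ≤ x)) = G.image (fun r => (iso r : ℝ)) := by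
      ext θ
      simp only [Finset.mem_filter, Finset.mem_image, hG, Finset.mem_univ, true_and]
      constructor
      · rintro ⟨hθT, hθx⟩
        exact ⟨iso.symm ⟨θ, hθT⟩, by simp [hθx], by simp⟩
      · rintro ⟨r, hrx, hr⟩
        exact ⟨hr ▸ (iso r).2, hr ▸ hrx⟩
    have := (Finset.card_image_of_injective
      (Finset.univ.filter fun j : Fin d => 1 - α j ≤ x) hinj).symm.trans
      (by rw [← e2, e3, Finset.card_image_of_injective _ hisoinj])
    omega
  have hdc : ∀ r : Fin d, r ∈ G ↔ r.val < G.card := by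
    intro r
    constructor
    · intro hr
      have hIic : Finset.Iic r ⊆ G := by
        intro r' hr'
        rw [hG, Finset.mem_filter]
        refine ⟨Finset.mem_univ _, le_trans ?_ (Finset.mem_filter.mp hr).2⟩
        exact Subtype.coe_le_coe.mpr (iso.le_iff_le.mpr (Finset.mem_Iic.mp hr'))
      have := Finset.card_le_card hIic
      rw [Fin.card_Iic] at this
      omega
    · intro hr
      by_contra hnot
      have hsub : G ⊆ Finset.Iio r := by
        intro g hg
        rw [Finset.mem_Iio]
        by_contra hge
        push_neg at hge
        exact hnot (Finset.mem_filter.mpr ⟨Finset.mem_univ _,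
          le_trans (Subtype.coe_le_coe.mpr (iso.le_iff_le.mpr hge)) (Finset.mem_filter.mp hg).2⟩)
      have := Finset.card_le_card hsub
      rw [Fin.card_Iio] at this
      omega
  constructor
  · intro h
    have hGc : G.card = i := by omega
    constructor
    · rcases Nat.eq_zero_or_pos i with h0 | h0
      · rw [h0, tt_zero]; exact hx0
      · have hr : (⟨i - 1, by omega⟩ : Fin d) ∈ G :=
          (hdc _).mpr (lt_of_lt_of_eq (show i - 1 < i by omega) hGc.symm)
        have := (Finset.mem_filter.mp hr).2
        rw [tt_eq hc (by omega) hi]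
        exact this
    · rcases eq_or_lt_of_le hi with h0 | h0
      · rw [tt_top hc (by omega)]; exact hx1
      · have hr : (⟨i, h0⟩ : Fin d) ∉ G := fun hmem => by
          have h5 := (hdc _).mp hmem
          rw [hGc] at h5
          exact absurd h5 (lt_irrefl i)
        have hx : ¬ ((iso ⟨i, h0⟩ : ℝ) ≤ x) := fun hle =>
          hr (Finset.mem_filter.mpr ⟨Finset.mem_univ _, hle⟩)
        push_neg at hx
        rw [tt_succ_eq hc h0]
        exact hx
  · rintro ⟨h1, h2⟩
    have hGe : G = Finset.univ.filter (fun r : Fin d => r.val < i) := by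
      ext r
      simp only [hG, Finset.mem_filter, Finset.mem_univ, true_and]
      constructor
      · intro hrx
        by_contra hge
        push_neg at hge
        have hid : i < d := lt_of_le_of_lt hge r.isLt
        have : tt α hc (i + 1) ≤ (iso r : ℝ) := by
          rw [tt_succ_eq hc hid]
          exact Subtype.coe_le_coe.mpr (iso.le_iff_le.mpr (by simp [Fin.mk_le_mk, Fin.le_def]; omega))
        linarith
      · intro hlt
        have h1' : 1 ≤ i := by omega
        have : (iso r : ℝ) ≤ tt α hc i := by
          rw [tt_eq hc h1' hi]
          exact Subtype.coe_le_coe.mpr (iso.le_iff_le.mpr (by simp [Fin.mk_le_mk, Fin.le_def]; omega))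
        linarith
    rw [hcard, hGe, card_filter_val_lt hi]

lemma Wcirc_eq (hT : ∀ θ ∈ thr α, 0 < θ ∧ θ < 1) (hinj : Function.Injective (fun j : Fin d => 1 - α j))
    {i : ℕ} (hi : i ≤ d) :
    Wcirc α i = pj '' Ico (tt α hc i) (tt α hc (i + 1)) := by
  have hset : {t : ℝ | t ∈ Set.Ico (0:ℝ) 1 ∧ {j : Fin d | 1 - α j ≤ t}.ncard = i} =
      Ico (tt α hc i) (tt α hc (i + 1)) := by
    ext x
    simp only [Set.mem_setOf_eq, Set.mem_Ico]
    constructor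
    · rintro ⟨⟨hx0, hx1⟩, hn⟩
      exact (Wchar hc hinj hx0 hx1 hi).mp hn
    · rintro ⟨h1, h2⟩
      have hx0 : (0:ℝ) ≤ x := le_trans (tt_nonneg hc hT i) h1
      have hx1 : x < 1 := lt_of_lt_of_le h2 (tt_le_one hc hT (i + 1))
      exact ⟨⟨hx0, hx1⟩, (Wchar hc hinj hx0 hx1 hi).mpr ⟨h1, h2⟩⟩
  rw [Wcirc, hset]
  rfl

end Thr


section Irr

variable {d : ℕ} {α : Fin d → ℝ}

lemma sum_single_mul (j : Fin d) (f : Fin d → ℝ) :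
    ∑ i, (if i = j then (1:ℝ) else 0) * f i = f j := by
  simp [ite_mul, Finset.sum_ite_eq']

lemma irr_alpha_inj (hirr : TotallyIrrational α) : Function.Injective α := by
  intro j k he
  by_contra hne
  set q : Fin d → ℚ := Pi.single j 1 - Pi.single k 1 with hq
  have hcast : ∀ i : Fin d, ((q i : ℚ) : ℝ)
      = (if i = j then (1:ℝ) else 0) - (if i = k then (1:ℝ) else 0) := by
    intro i
    simp only [hq, Pi.sub_apply, Pi.single_apply]
    push_cast
    split_ifs <;> norm_num
  have key : ((0:ℚ):ℝ) + ∑ i, ((q i : ℚ) : ℝ) * α i = 0 := by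
    rw [Finset.sum_congr rfl (fun i _ => by rw [hcast i])]
    simp only [sub_mul, Finset.sum_sub_distrib, sum_single_mul]
    push_cast
    linarith [he]
  have h0 := (hirr 0 _ key).2
  have := congrFun h0 j
  simp only [hq, Pi.sub_apply, Pi.single_apply, if_pos rfl, Pi.zero_apply] at this
  rw [if_neg hne] at this
  norm_num at this

lemma irr_alpha_pos (hirr : TotallyIrrational α) (hα : ∀ i, α i ∈ Set.Ico (0:ℝ) 1) :
    ∀ j, 0 < α j := by
  intro j
  rcases eq_or_lt_of_le (hα j).1 with h0 | h; swap
  · exact h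
  exfalso
  set q : Fin d → ℚ := Pi.single j 1 with hq
  have hcast : ∀ i : Fin d, ((q i : ℚ) : ℝ)
      = (if i = j then (1:ℝ) else 0) := by
    intro i
    simp only [hq, Pi.single_apply]
    split_ifs <;> norm_num
  have key : ((0:ℚ):ℝ) + ∑ i, ((q i : ℚ) : ℝ) * α i = 0 := by
    rw [Finset.sum_congr rfl (fun i _ => by rw [hcast i])]
    rw [sum_single_mul]
    push_cast
    linarith
  have h1 := (hirr 0 _ key).2
  have := congrFun h1 j
  simp only [hq, Pi.single_apply, if_pos rfl, Pi.zero_apply] at this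
  norm_num at this

lemma dotA_step {m v : Zd d} {j : Fin d} (h : v - m = Pi.single j 1) :
    dotA α v = dotA α m + α j := by
  have hv : ∀ i : Fin d, (v i : ℝ) * α i = (m i : ℝ) * α i + (if i = j then (1:ℝ) else 0) * α i := by
    intro i
    have h' := congrFun h i
    simp only [Pi.sub_apply, Pi.single_apply] at h'
    have h2 : (v i : ℝ) = (m i : ℝ) + (if i = j then (1:ℝ) else 0) := by
      rcases eq_or_ne i j with rfl | hne
      · rw [if_pos rfl] at h' ⊢
        have h3 : v i = 1 + m i := by omega
        rw [h3]
        push_cast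
        ring
      · rw [if_neg hne] at h' ⊢
        have : v i = m i := by omega
        rw [this]
        ring
    rw [h2]
    ring
  rw [dotA, dotA, Finset.sum_congr rfl (fun i _ => hv i), Finset.sum_add_distrib,
    sum_single_mul]

lemma keyL (hc : (thr α).card = d) (hT : ∀ θ ∈ thr α, 0 < θ ∧ θ < 1)
    {a b : ℕ} (j : Fin d) (hαj0 : 0 < α j) (hαj1 : α j < 1)
    {ε : ℝ} (hε : ε = 1 ∨ ε = -1) (m : ℤ)
    (h1 : tt α hc a < tt α hc (b + 1) + (ε * α j + m))
    (h2 : tt α hc b + (ε * α j + m) + 1 < tt α hc (a + 1)) : False := by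
  have hθ : (1 - α j) ∈ thr α := Finset.mem_image_of_mem _ (Finset.mem_univ j)
  have b0 : 0 ≤ tt α hc b := tt_nonneg hc hT b
  have b1 : tt α hc (b + 1) ≤ 1 := tt_le_one hc hT (b + 1)
  have a0 : 0 ≤ tt α hc a := tt_nonneg hc hT a
  have a1 : tt α hc (a + 1) ≤ 1 := tt_le_one hc hT (a + 1)
  rcases hε with rfl | rfl
  · have hm1 : (m:ℝ) < 0 := by linarith
    have hm2 : (-2:ℝ) < (m:ℝ) := by linarith
    have hm : m = -1 := by
      have l1 : m < 0 := by exact_mod_cast hm1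
      have l2 : (-2:ℤ) < m := by exact_mod_cast hm2
      omega
    rw [hm] at h1 h2
    push_cast at h1 h2
    exact no_between hc hT hθ (c := b) ⟨by linarith, by linarith⟩
  · have hm1 : (m:ℝ) < 1 := by linarith
    have hm2 : (-1:ℝ) < (m:ℝ) := by linarith
    have hm : m = 0 := by
      have l1 : m < 1 := by exact_mod_cast hm1
      have l2 : (-1:ℤ) < m := by exact_mod_cast hm2
      omega
    rw [hm] at h1 h2
    push_cast at h1 h2
    exact no_between hc hT hθ (c := a) ⟨by linarith, by linarith⟩

end Irr

end
end IpAux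

open IpAux

/-- For totally irrational `α` and a pattern `p` with finite nonempty
connected support `S`, the set `I_p = ⋂_{n ∈ S} (W_{p(n)} - α·n) ⊆ ℝ/ℤ` is either empty or
an interval of the circle. -/
theorem Ip_empty_or_interval {d : ℕ} (α : Fin d → ℝ)
    (hα : ∀ i, α i ∈ Set.Ico (0 : ℝ) 1) (hirr : TotallyIrrational α)
    (S : Finset (Zd d)) (hS : S.Nonempty) (hconn : FinsetConnected S)
    (p : Zd d → Fin (d + 1)) :
    (⋂ n ∈ S, {z : AddCircle (1 : ℝ) |
        z + ((dotA α n : ℝ) : AddCircle (1 : ℝ)) ∈ Wcirc α (p n : ℕ)}) = ∅ ∨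
    ∃ I : Set ℝ, I.OrdConnected ∧
      (⋂ n ∈ S, {z : AddCircle (1 : ℝ) |
        z + ((dotA α n : ℝ) : AddCircle (1 : ℝ)) ∈ Wcirc α (p n : ℕ)}) =
      (fun t : ℝ => (t : AddCircle (1 : ℝ))) '' I := by
  classical
  have hpos : ∀ j, 0 < α j := irr_alpha_pos hirr hα
  have hainj : Function.Injective α := irr_alpha_inj hirr
  have hinj : Function.Injective (fun j : Fin d => 1 - α j) := by
    intro u w h
    simp only at h
    exact hainj (by linarith)
  have hc : (thr α).card = d := by
    rw [thr, Finset.card_image_of_injective _ hinj, Finset.card_univ, Fintype.card_fin]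
  have hT : ∀ θ ∈ thr α, 0 < θ ∧ θ < 1 := by
    intro θ hθ
    rw [thr, Finset.mem_image] at hθ
    obtain ⟨j, _, rfl⟩ := hθ
    exact ⟨by linarith [(hα j).2], by linarith [hpos j]⟩
  have hA : ∀ n : Zd d, {z : AddCircle (1 : ℝ) |
      z + ((dotA α n : ℝ) : AddCircle (1 : ℝ)) ∈ Wcirc α (p n : ℕ)}
      = pj '' Set.Ico (tt α hc (p n : ℕ) - dotA α n)
          (tt α hc ((p n : ℕ) + 1) - dotA α n) := by
    intro n
    rw [Wcirc_eq hc hT hinj (Nat.lt_succ_iff.mp (p n).isLt)]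
    exact arc_translate _ _ _
  have key : ∀ N : ℕ, ∀ T : Finset (Zd d), T.card ≤ N → T.Nonempty → FinsetConnected T →
      ∃ l r : ℝ, l ≤ r ∧ r ≤ l + 1 ∧
        (⋂ n ∈ T, {z : AddCircle (1 : ℝ) |
          z + ((dotA α n : ℝ) : AddCircle (1 : ℝ)) ∈ Wcirc α (p n : ℕ)})
          = pj '' Set.Ico l r := by
    intro N
    induction N with
    | zero =>
      intro T hcard hne _
      have := Finset.card_pos.mpr hne
      omega
    | succ N ih =>
      intro T hcard hne hconnT
      rcases eq_or_lt_of_le (Finset.one_le_card.mpr hne) with h1 | h2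
      · obtain ⟨n, rfl⟩ := Finset.card_eq_one.mp h1.symm
        refine ⟨tt α hc (p n : ℕ) - dotA α n, tt α hc ((p n : ℕ) + 1) - dotA α n, ?_, ?_, ?_⟩
        · have := tt_mono hc hT (Nat.le_succ (p n : ℕ))
          linarith
        · have h1' := tt_nonneg hc hT (p n : ℕ)
          have h2' := tt_le_one hc hT ((p n : ℕ) + 1)
          linarith
        · rw [Finset.set_biInter_singleton]
          exact hA n
      · obtain ⟨v₀, hv₀T, hne', hconn'', m, hmE, hadj⟩ := exists_leaf T hconnT h2
        have hcard' : (T.erase v₀).card ≤ N := by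
          rw [Finset.card_erase_of_mem hv₀T]
          omega
        obtain ⟨l, r, hlr, hr1, heq⟩ := ih (T.erase v₀) hcard' hne' hconn''
        have hsplit : (⋂ n ∈ T, {z : AddCircle (1 : ℝ) |
            z + ((dotA α n : ℝ) : AddCircle (1 : ℝ)) ∈ Wcirc α (p n : ℕ)})
            = (⋂ n ∈ T.erase v₀, {z : AddCircle (1 : ℝ) |
                z + ((dotA α n : ℝ) : AddCircle (1 : ℝ)) ∈ Wcirc α (p n : ℕ)})
              ∩ {z : AddCircle (1 : ℝ) |
                z + ((dotA α v₀ : ℝ) : AddCircle (1 : ℝ)) ∈ Wcirc α (p v₀ : ℕ)} := by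
          conv_lhs => rw [← Finset.insert_erase hv₀T]
          rw [Finset.set_biInter_insert]
          exact Set.inter_comm _ _
        obtain ⟨j, hj⟩ := hadj
        have hbb : tt α hc (p v₀ : ℕ) - dotA α v₀ ≤ tt α hc ((p v₀ : ℕ) + 1) - dotA α v₀ := by
          have := tt_mono hc hT (Nat.le_succ (p v₀ : ℕ))
          linarith
        have H : ¬ ∃ k : ℤ, l < (tt α hc ((p v₀ : ℕ) + 1) - dotA α v₀) + k ∧
            (tt α hc (p v₀ : ℕ) - dotA α v₀) + (k:ℝ) + 1 < r := by
          rintro ⟨k, hk1, hk2⟩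
          have hb0 : 0 ≤ tt α hc (p v₀ : ℕ) := tt_nonneg hc hT _
          have hb1 : tt α hc ((p v₀ : ℕ) + 1) ≤ 1 := tt_le_one hc hT _
          have hlr' : l < r := by linarith
          have hsub : pj '' Set.Ico l r ⊆
              pj '' Set.Ico (tt α hc (p m : ℕ) - dotA α m)
                (tt α hc ((p m : ℕ) + 1) - dotA α m) := by
            rw [← heq, ← hA m]
            exact Set.biInter_subset_of_mem hmE
          have hd1 : 0 < d := Nat.lt_of_le_of_lt (Nat.zero_le _) j.2
          have ht1pos : 0 < tt α hc 1 := (hT _ (tt_mem hc (le_refl 1) hd1)).1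
          have ht1lt : tt α hc 1 < 1 := (hT _ (tt_mem hc (le_refl 1) hd1)).2
          have hgap : tt α hc ((p m : ℕ) + 1) - dotA α m < (tt α hc (p m : ℕ) - dotA α m) + 1 := by
            rcases Nat.eq_zero_or_pos (p m : ℕ) with h0 | h0
            · rw [h0, tt_zero]
              have : tt α hc (0 + 1) ≤ tt α hc 1 := le_of_eq rfl
              linarith
            · have hma : tt α hc 1 ≤ tt α hc (p m : ℕ) := tt_mono hc hT h0
              have := tt_le_one hc hT ((p m : ℕ) + 1)
              linarith
          obtain ⟨k₀, hk₀1, hk₀2⟩ := arc_subset_arc hlr' hgap hsub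
          rcases hj with hj | hj
          · have hcv : dotA α v₀ = dotA α m + α j := dotA_step hj
            refine keyL hc hT (a := (p m : ℕ)) (b := (p v₀ : ℕ)) j (hpos j) ((hα j).2)
              (Or.inr rfl) (k - k₀) ?_ ?_
            · push_cast
              linarith
            · push_cast
              linarith
          · have hcv : dotA α m = dotA α v₀ + α j := dotA_step hj
            refine keyL hc hT (a := (p m : ℕ)) (b := (p v₀ : ℕ)) j (hpos j) ((hα j).2)
              (Or.inl rfl) (k - k₀) ?_ ?_
            · push_cast
              linarith
            · push_cast
              linarith
        obtain ⟨l', r', hl', hr', hint⟩ := arc_inter hlr hr1 hbb H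
        refine ⟨l', r', hl', hr', ?_⟩
        rw [hsplit, heq, hA v₀]
        exact hint
  obtain ⟨l, r, hlr, _, heq⟩ := key S.card S le_rfl hS hconn
  rcases eq_or_lt_of_le hlr with h | h
  · left
    rw [heq, ← h, Set.Ico_self, Set.image_empty]
  · right
    exact ⟨Set.Ico l r, Set.ordConnected_Ico, heq⟩
end

section
/- Let α ∈ [0,1)^d be totally irrational. Then for every positive integer vector (m₁,…,m_d), the number of distinct rectangular patterns of shape ∏_i {0,…,m_i−1} occurring in the characteristic Sturmian configuration c_α equals m₁⋯m_d(1 + 1/m₁ + ⋯ + 1/m_d). -/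
lemma dotA_add {d : ℕ} (α : Fin d → ℝ) (a b : Zd d) : dotA α (a + b) = dotA α a + dotA α b := by
  simp [dotA, add_mul, Finset.sum_add_distrib]

lemma dotA_sub {d : ℕ} (α : Fin d → ℝ) (a b : Zd d) : dotA α (a - b) = dotA α a - dotA α b := by
  simp [dotA, sub_mul, Finset.sum_sub_distrib]

lemma dotA_zero {d : ℕ} (α : Fin d → ℝ) : dotA α 0 = 0 := by simp [dotA]

lemma dotA_pisingle {d : ℕ} (α : Fin d → ℝ) (i : Fin d) (j : ℤ) :
    dotA α (Pi.single i j) = (j : ℝ) * α i := by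
  simp [dotA, Pi.single_apply]

lemma floor_add_eq' (x t : ℝ) (h0 : 0 ≤ t) (h1 : t < 1) :
    ⌊x + t⌋ = ⌈x⌉ - 1 + if Int.fract (-x) ≤ t then 1 else 0 := by
  have hceil : (⌈x⌉ : ℝ) = x + Int.fract (-x) := by
    rw [Int.fract, Int.floor_neg]; push_cast; ring
  have hle : x ≤ (⌈x⌉ : ℝ) := Int.le_ceil x
  have hlt : (⌈x⌉ : ℝ) < x + 1 := Int.ceil_lt_add_one x
  split_ifs with h
  · have : ⌊x + t⌋ = ⌈x⌉ := by
      rw [Int.floor_eq_iff]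
      constructor
      · linarith
      · push_cast; linarith
    omega
  · push_neg at h
    have : ⌊x + t⌋ = ⌈x⌉ - 1 := by
      rw [Int.floor_eq_iff]
      constructor
      · push_cast; linarith
      · push_cast; linarith
    omega

lemma ti_int {d : ℕ} {α : Fin d → ℝ} (hirr : TotallyIrrational α) {n : Zd d} {k : ℤ}
    (h : dotA α n = (k : ℝ)) : n = 0 := by
  have h2 := hirr (-(k : ℚ)) (fun i => (n i : ℚ))
  simp only [Rat.cast_neg, Rat.cast_intCast] at h2
  have h3 : (-(k:ℝ)) + ∑ i, ((n i : ℚ) : ℝ) * α i = 0 := by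
    push_cast
    rw [show ∑ i, (n i : ℝ) * α i = dotA α n from rfl, h]; ring
  obtain ⟨-, hq⟩ := h2 h3
  funext i
  have := congrFun hq i
  simpa using this

lemma ti_fract_inj {d : ℕ} {α : Fin d → ℝ} (hirr : TotallyIrrational α) {s s' : Zd d}
    (h : Int.fract (-(dotA α s)) = Int.fract (-(dotA α s'))) : s = s' := by
  rw [Int.fract_eq_fract] at h
  obtain ⟨z, hz⟩ := h
  have : dotA α (s' - s) = (z : ℝ) := by rw [dotA_sub]; linarith
  have h0 := ti_int hirr this
  have : s' = s + 0 := by rw [← h0]; ring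
  simp at this; exact this.symm

lemma ti_irrational {d : ℕ} {α : Fin d → ℝ} (hirr : TotallyIrrational α) (i : Fin d) :
    Irrational (α i) := by
  rintro ⟨x, hx⟩
  have h2 := hirr (-x) (Pi.single i 1)
  have h3 : ((-x : ℚ) : ℝ) + ∑ j, ((Pi.single i 1 : Fin d → ℚ) j : ℝ) * α j = 0 := by
    have : ∀ j, ((Pi.single i 1 : Fin d → ℚ) j : ℝ) * α j
        = if j = i then α j else 0 := by
      intro j; rw [Pi.single_apply]; split_ifs <;> simp
    rw [Finset.sum_congr rfl (fun j _ => this j), Finset.sum_ite_eq' Finset.univ i (fun j => α j)]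
    simp [← hx]
  obtain ⟨-, hq⟩ := h2 h3
  have := congrFun hq i
  simp at this

lemma ti_dense_orbit {d : ℕ} {α : Fin d → ℝ} (hirr : TotallyIrrational α) (hd : 0 < d)
    {l u : ℝ} (hl : 0 ≤ l) (hu : u ≤ 1) (hlu : l < u) :
    ∃ n : Zd d, Int.fract (dotA α n) ∈ Set.Ioo l u := by
  set i0 : Fin d := ⟨0, hd⟩
  have hirr0 : Irrational (α i0) := ti_irrational hirr i0
  set S : AddSubgroup ℝ := AddSubgroup.closure {1, α i0} with hS
  have hdense : Dense (S : Set ℝ) := by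
    rcases S.dense_or_cyclic with h | ⟨a, ha⟩
    · exact h
    · exfalso
      have h1 : (1 : ℝ) ∈ S := AddSubgroup.subset_closure (by simp)
      have hα0 : α i0 ∈ S := AddSubgroup.subset_closure (by simp)
      rw [ha, AddSubgroup.mem_closure_singleton] at h1 hα0
      obtain ⟨k, hk⟩ := h1
      obtain ⟨j, hj⟩ := hα0
      rw [zsmul_eq_mul] at hk hj
      have hk0 : (k : ℝ) ≠ 0 := by
        intro h; rw [h, zero_mul] at hk; exact one_ne_zero hk.symm
      refine hirr0 ⟨(j : ℚ) / (k : ℚ), ?_⟩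
      have ha' : a = 1 / (k : ℝ) := by field_simp at hk ⊢; linarith
      rw [← hj, ha']
      have hkq : ((k:ℚ):ℝ) ≠ 0 := by push_cast; exact hk0
      push_cast
      field_simp
  obtain ⟨g, hgS, hg⟩ := hdense.exists_between hlu
  rw [hS, SetLike.mem_coe, AddSubgroup.mem_closure_pair] at hgS
  obtain ⟨k, j, hkj⟩ := hgS
  refine ⟨Pi.single i0 j, ?_⟩
  have hdot : dotA α (Pi.single i0 j) = g - k := by
    rw [dotA_pisingle]
    rw [zsmul_eq_mul, zsmul_eq_mul, mul_one] at hkj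
    linarith
  rw [hdot]
  have : Int.fract (g - (k:ℝ)) = g := by
    rw [Int.fract_sub_intCast]
    exact Int.fract_eq_self.mpr ⟨le_trans hl (le_of_lt hg.1), lt_of_lt_of_le hg.2 hu⟩
  rw [this]; exact hg

noncomputable def boxB {d : ℕ} (m : Fin d → ℕ) : Finset (Zd d) :=
  Fintype.piFinset fun i => Finset.Ico (0 : ℤ) (m i)
/-- face in direction i -/

noncomputable def faceF {d : ℕ} (m : Fin d → ℕ) (i : Fin d) : Finset (Zd d) :=
  Fintype.piFinset fun j => if j = i then {(m i : ℤ)} else Finset.Ico (0 : ℤ) (m j)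
/-- enlarged box -/

noncomputable def setU {d : ℕ} (m : Fin d → ℕ) : Finset (Zd d) :=
  boxB m ∪ Finset.univ.biUnion (faceF m)

noncomputable def gg {d : ℕ} (α : Fin d → ℝ) (t : ℝ) (s : Zd d) : ℤ := ⌊dotA α s + t⌋

noncomputable def PP {d : ℕ} (α : Fin d → ℝ) (t : ℝ) (s : Zd d) : ℤ :=
  ∑ i, (gg α t (s + Pi.single i 1) - gg α t s)

lemma mem_boxB {d : ℕ} {m : Fin d → ℕ} {s : Zd d} :
    s ∈ boxB m ↔ ∀ i, 0 ≤ s i ∧ s i < m i := by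
  simp [boxB, Fintype.mem_piFinset, Finset.mem_Ico]

lemma mem_faceF {d : ℕ} {m : Fin d → ℕ} {i : Fin d} {s : Zd d} :
    s ∈ faceF m i ↔ s i = m i ∧ ∀ j, j ≠ i → 0 ≤ s j ∧ s j < m j := by
  simp only [faceF, Fintype.mem_piFinset]
  constructor
  · intro h
    constructor
    · have := h i; simp at this; exact this
    · intro j hj; have := h j; simp [hj] at this; exact this
  · rintro ⟨h1, h2⟩ j
    by_cases hj : j = i
    · subst hj; simp [h1]
    · simp [hj]; exact h2 j hj

lemma mem_setU_add {d : ℕ} {m : Fin d → ℕ} (hm : ∀ i, 0 < m i) {s : Zd d}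
    (hs : s ∈ boxB m) (i : Fin d) : s + Pi.single i 1 ∈ setU m := by
  rw [mem_boxB] at hs
  by_cases h : s i + 1 < m i
  · apply Finset.mem_union_left
    rw [mem_boxB]
    intro j
    by_cases hj : j = i
    · subst hj; simp [Pi.single_apply]; constructor
      · linarith [(hs j).1]
      · simpa using h
    · simp [Pi.single_apply, hj]; exact hs j
  · apply Finset.mem_union_right
    refine Finset.mem_biUnion.mpr ⟨i, Finset.mem_univ i, ?_⟩
    rw [mem_faceF]
    have hsi := hs i
    constructor
    · simp [Pi.single_apply]; omega
    · intro j hj; simp [Pi.single_apply, hj]; exact hs j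

lemma boxB_subset_setU {d : ℕ} {m : Fin d → ℕ} : boxB m ⊆ setU m :=
  Finset.subset_union_left

/-- Key propagation lemma, one-sided. -/

lemma crux_aux {d : ℕ} (α : Fin d → ℝ) (m : Fin d → ℕ) (hm : ∀ i, 0 < m i)
    {t t' : ℝ} (h0 : 0 ≤ t) (htt : t ≤ t') (h1 : t' < 1)
    (hP : ∀ s ∈ boxB m, PP α t s = PP α t' s) :
    ∀ s ∈ setU m, gg α t s = gg α t' s := by
  -- D s ∈ {0,1}
  have hD0 : ∀ s, gg α t s ≤ gg α t' s := fun s =>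
    Int.floor_le_floor (by linarith)
  have hD1 : ∀ s, gg α t' s ≤ gg α t s + 1 := by
    intro s
    have : dotA α s + t' ≤ dotA α s + t + 1 := by linarith
    calc gg α t' s ≤ ⌊dotA α s + t + 1⌋ := Int.floor_le_floor this
      _ = gg α t s + 1 := Int.floor_add_one _
  -- D 0 = 0
  have hzero : gg α t 0 = gg α t' 0 := by
    unfold gg; rw [dotA_zero]; simp
    rw [Int.floor_eq_zero_iff.mpr ⟨h0, by linarith⟩,
       Int.floor_eq_zero_iff.mpr ⟨by linarith, h1⟩]
  -- step
  have hstep : ∀ s ∈ boxB m, ∀ i, (gg α t' (s + Pi.single i 1) - gg α t (s + Pi.single i 1))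
      = gg α t' s - gg α t s := by
    intro s hs i
    have hsum : ∑ j, ((gg α t' (s + Pi.single j 1) - gg α t (s + Pi.single j 1))
        - (gg α t' s - gg α t s)) = 0 := by
      have := hP s hs
      unfold PP at this
      simp only [Finset.sum_sub_distrib] at this ⊢
      omega
    rcases eq_or_lt_of_le (hD0 s) with hc | hc
    · -- D s = 0, each term nonneg
      have := (Finset.sum_eq_zero_iff_of_nonneg ?_).mp hsum i (Finset.mem_univ i)
      · omega
      · intro j _
        have := hD0 (s + Pi.single j 1)
        omega
    · -- D s = 1, each term nonpos
      have hds : gg α t' s = gg α t s + 1 := by have := hD1 s; omega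
      have := (Finset.sum_eq_zero_iff_of_nonpos ?_).mp hsum i (Finset.mem_univ i)
      · omega
      · intro j _
        have := hD1 (s + Pi.single j 1)
        have := hD0 (s + Pi.single j 1)
        omega
  -- induction over the box
  have hbox : ∀ N : ℕ, ∀ s ∈ boxB m, (∑ i, (s i).toNat) = N → gg α t s = gg α t' s := by
    intro N
    induction N using Nat.strong_induction_on with
    | _ N ih =>
      intro s hs hsum
      by_cases hz : s = 0
      · subst hz; exact hzero
      · have : ∃ i, s i ≠ 0 := by
          by_contra h; push_neg at h; exact hz (funext h)
        obtain ⟨i, hi⟩ := this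
        rw [mem_boxB] at hs
        have hpos : 1 ≤ s i := by have := (hs i).1; omega
        set s' : Zd d := s - Pi.single i 1 with hs'
        have hs'app : ∀ j, s' j = if j = i then s i - 1 else s j := by
          intro j; simp [hs', Pi.single_apply]
          split_ifs <;> simp_all
        have hs'B : s' ∈ boxB m := by
          rw [mem_boxB]; intro j
          rw [hs'app j]
          split_ifs with hj
          · subst hj; exact ⟨by omega, by have := (hs j).2; omega⟩
          · exact hs j
        have hback : s' + Pi.single i 1 = s := by
          funext j; simp [hs'app j, Pi.single_apply]
          split_ifs with hj <;> simp_all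
        have hsum' : (∑ j, (s' j).toNat) + 1 = N := by
          rw [← hsum]
          rw [← Finset.add_sum_erase _ _ (Finset.mem_univ i),
              ← Finset.add_sum_erase _ (fun j => (s j).toNat) (Finset.mem_univ i)]
          have h1 : (s' i).toNat + 1 = (s i).toNat := by rw [hs'app i]; simp; omega
          have h2 : ∑ j ∈ Finset.univ.erase i, (s' j).toNat
              = ∑ j ∈ Finset.univ.erase i, (s j).toNat := by
            apply Finset.sum_congr rfl
            intro j hj
            rw [hs'app j, if_neg (Finset.mem_erase.mp hj).1]
          omega
        have hDs' : gg α t s' = gg α t' s' := ih (N - 1) (by omega) s' hs'B (by omega)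
        have := hstep s' hs'B i
        rw [hback] at this
        omega
  intro s hs
  rcases Finset.mem_union.mp hs with hsB | hsF
  · exact hbox _ s hsB rfl
  · obtain ⟨i, -, hsi⟩ := Finset.mem_biUnion.mp hsF
    rw [mem_faceF] at hsi
    set s' : Zd d := s - Pi.single i 1 with hs'
    have hs'app : ∀ j, s' j = if j = i then s i - 1 else s j := by
      intro j; simp [hs', Pi.single_apply]
      split_ifs <;> simp_all
    have hs'B : s' ∈ boxB m := by
      rw [mem_boxB]; intro j
      rw [hs'app j]
      split_ifs with hj
      · subst hj; rw [hsi.1]; have := hm j; omega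
      · exact hsi.2 j hj
    have hback : s' + Pi.single i 1 = s := by
      funext j; simp [hs'app j, Pi.single_apply]
      split_ifs with hj <;> simp_all
    have h1 := hstep s' hs'B i
    rw [hback] at h1
    have h2 := hbox _ s' hs'B rfl
    omega

lemma gg_eq_iff {d : ℕ} (α : Fin d → ℝ) {t t' : ℝ} (h0 : 0 ≤ t) (h1 : t < 1)
    (h0' : 0 ≤ t') (h1' : t' < 1) (s : Zd d) :
    gg α t s = gg α t' s ↔ ((Int.fract (-(dotA α s)) ≤ t) ↔ (Int.fract (-(dotA α s)) ≤ t')) := by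
  unfold gg
  rw [floor_add_eq' _ _ h0 h1, floor_add_eq' _ _ h0' h1']
  split_ifs with ha hb hb <;> simp [ha, hb] <;> omega

lemma cLow_eq_PP {d : ℕ} (α : Fin d → ℝ) (n s : Zd d) :
    cLow α (n + s) = PP α (Int.fract (dotA α n)) s := by
  unfold cLow PP gg
  apply Finset.sum_congr rfl
  intro i _
  have h1 : dotA α (n + s) = (α i + dotA α s + Int.fract (dotA α n)) + (⌊dotA α n⌋ : ℝ) - α i := by
    rw [dotA_add, Int.fract]; ring
  have h2 : dotA α (s + Pi.single i 1) + Int.fract (dotA α n)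
      = α i + dotA α s + Int.fract (dotA α n) := by
    rw [dotA_add, dotA_pisingle]; ring
  have h3 : α i + dotA α (n + s) = (α i + dotA α s + Int.fract (dotA α n)) + (⌊dotA α n⌋ : ℝ) := by
    rw [h1]; ring
  have h4 : dotA α (n + s) = (dotA α s + Int.fract (dotA α n)) + (⌊dotA α n⌋ : ℝ) := by
    rw [h1]; ring
  rw [h2, h3, h4, Int.floor_add_intCast, Int.floor_add_intCast]
  ring

lemma PP_of_gg {d : ℕ} (α : Fin d → ℝ) (m : Fin d → ℕ) (hm : ∀ i, 0 < m i) {t t' : ℝ}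
    (hg : ∀ s ∈ setU m, gg α t s = gg α t' s) :
    ∀ s ∈ boxB m, PP α t s = PP α t' s := by
  intro s hs
  unfold PP
  apply Finset.sum_congr rfl
  intro i _
  rw [hg s (boxB_subset_setU hs), hg _ (mem_setU_add hm hs i)]

/-- For totally irrational `α` and a positive integer vector `(m₁,…,m_d)`,
the number of rectangular patterns of shape `∏ᵢ {0,…,mᵢ-1}` occurring in `c_α` equals
`m₁⋯m_d (1 + 1/m₁ + ⋯ + 1/m_d)`. -/
theorem sturmian_rectangular_complexity (d : ℕ) (α : Fin d → ℝ)
    (hα : ∀ i, α i ∈ Set.Ico (0 : ℝ) 1) (hirr : TotallyIrrational α)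
    (m : Fin d → ℕ) (hm : ∀ i, 0 < m i) :
    ((langOn (cLow α) (Fintype.piFinset fun i => Finset.Ico (0 : ℤ) (m i))).ncard : ℚ) =
      (∏ i, (m i : ℚ)) * (1 + ∑ i, 1 / (m i : ℚ)) := by
  rcases Nat.eq_zero_or_pos d with hd | hd
  · subst hd
    have hc : ∀ n : Zd 0, cLow α n = 0 := by intro n; simp [cLow]
    have hL : langOn (cLow α) (Fintype.piFinset fun i => Finset.Ico (0 : ℤ) (m i))
        = {fun _ => 0} := by
      ext q
      simp only [langOn, Set.mem_setOf_eq, Set.mem_singleton_iff]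
      constructor
      · rintro ⟨n, hn⟩; funext s; rw [← hn s, hc]
      · rintro rfl; exact ⟨0, fun s => hc _⟩
    rw [hL]
    simp
  -- positive dimension
  set β : Zd d → ℝ := fun s => Int.fract (-(dotA α s)) with hβ
  set Φ : ℝ → ({x // x ∈ boxB m} → ℤ) := fun t s => PP α t s.val with hΦ
  set L : Finset ℝ := (setU m).image β with hLdef
  have hβ0 : ∀ s, 0 ≤ β s := fun s => Int.fract_nonneg _
  have hβ1 : ∀ s, β s < 1 := fun s => Int.fract_lt_one _
  have hL0 : ∀ ℓ ∈ L, 0 ≤ ℓ ∧ ℓ < 1 := by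
    intro ℓ hℓ
    obtain ⟨s, -, rfl⟩ := Finset.mem_image.mp hℓ
    exact ⟨hβ0 s, hβ1 s⟩
  have h0B : (0 : Zd d) ∈ boxB m := by
    rw [mem_boxB]; intro i
    simp only [Pi.zero_apply]
    exact ⟨le_refl _, by exact_mod_cast hm i⟩
  have h0L : (0 : ℝ) ∈ L := by
    refine Finset.mem_image.mpr ⟨0, boxB_subset_setU h0B, ?_⟩
    simp [hβ, dotA_zero]
  -- Φ equality from breakpoint condition
  have hPhiEq : ∀ t t', 0 ≤ t → t < 1 → 0 ≤ t' → t' < 1 →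
      (∀ s ∈ setU m, (β s ≤ t ↔ β s ≤ t')) → Φ t = Φ t' := by
    intro t t' ht0 ht1 ht0' ht1' h
    have hg : ∀ s ∈ setU m, gg α t s = gg α t' s := fun s hs =>
      (gg_eq_iff α ht0 ht1 ht0' ht1' s).mpr (h s hs)
    funext s
    exact PP_of_gg α m hm hg s.val s.property
  -- breakpoint condition from Φ equality
  have hPhiGG : ∀ t t', 0 ≤ t → t < 1 → 0 ≤ t' → t' < 1 → Φ t = Φ t' →
      ∀ s ∈ setU m, (β s ≤ t ↔ β s ≤ t') := by
    intro t t' ht0 ht1 ht0' ht1' h s hs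
    have hPB : ∀ s ∈ boxB m, PP α t s = PP α t' s := by
      intro s hs
      exact congrFun h (⟨s, hs⟩ : {x // x ∈ boxB m})
    rcases le_total t t' with hc | hc
    · exact (gg_eq_iff α ht0 ht1 ht0' ht1' s).mp (crux_aux α m hm ht0 hc ht1' hPB s hs)
    · have hPB' : ∀ s ∈ boxB m, PP α t' s = PP α t s := fun s hs => (hPB s hs).symm
      exact ((gg_eq_iff α ht0' ht1' ht0 ht1 s).mp
        (crux_aux α m hm ht0' hc ht1 hPB' s hs)).symm
  -- the language is the image of L under Φ
  have hlang : langOn (cLow α) (Fintype.piFinset fun i => Finset.Ico (0 : ℤ) (m i))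
      = Φ '' ↑L := by
    ext q
    constructor
    · rintro ⟨n, hn⟩
      set t : ℝ := Int.fract (dotA α n) with htdef
      have ht0 : 0 ≤ t := Int.fract_nonneg _
      have ht1 : t < 1 := Int.fract_lt_one _
      have hqt : q = Φ t := by
        funext s
        rw [← hn s, cLow_eq_PP]
      set Lf : Finset ℝ := L.filter (fun x => x ≤ t) with hLf
      have hne : Lf.Nonempty := ⟨0, Finset.mem_filter.mpr ⟨h0L, ht0⟩⟩
      set ℓ : ℝ := Lf.max' hne with hℓdef
      have hℓmem := Lf.max'_mem hne
      have hℓL : ℓ ∈ L := (Finset.mem_filter.mp hℓmem).1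
      have hℓt : ℓ ≤ t := (Finset.mem_filter.mp hℓmem).2
      refine ⟨ℓ, hℓL, ?_⟩
      rw [hqt]
      apply hPhiEq ℓ t (hL0 ℓ hℓL).1 (hL0 ℓ hℓL).2 ht0 ht1
      intro s hs
      constructor
      · intro h; linarith
      · intro h
        exact Lf.le_max' (β s) (Finset.mem_filter.mpr ⟨Finset.mem_image.mpr ⟨s, hs, rfl⟩, h⟩)
    · rintro ⟨ℓ, hℓ, rfl⟩
      have hℓL : ℓ ∈ L := hℓ
      have hℓ0 : 0 ≤ ℓ := (hL0 ℓ hℓL).1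
      have hℓ1 : ℓ < 1 := (hL0 ℓ hℓL).2
      by_cases hne : (L.filter (fun x => ℓ < x)).Nonempty
      case pos =>
        set u : ℝ := (L.filter (fun x => ℓ < x)).min' hne with hu
        have humem := (L.filter (fun x => ℓ < x)).min'_mem hne
        have huL : u ∈ L := (Finset.mem_filter.mp humem).1
        have hℓu : ℓ < u := (Finset.mem_filter.mp humem).2
        have hu1 : u ≤ 1 := le_of_lt (hL0 u huL).2
        obtain ⟨n, hn⟩ := ti_dense_orbit hirr hd hℓ0 hu1 hℓu
        refine ⟨n, fun s => ?_⟩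
        rw [cLow_eq_PP]
        have := hPhiEq (Int.fract (dotA α n)) ℓ (Int.fract_nonneg _) (Int.fract_lt_one _)
          hℓ0 hℓ1 ?_
        · exact congrFun this s
        · intro s' hs'
          constructor
          · intro h
            by_contra hcon
            push_neg at hcon
            have : β s' ∈ L.filter (fun x => ℓ < x) :=
              Finset.mem_filter.mpr ⟨Finset.mem_image.mpr ⟨s', hs', rfl⟩, hcon⟩
            have := (L.filter (fun x => ℓ < x)).min'_le _ this
            have := hn.2
            linarith
          · intro h
            linarith [hn.1]
      case neg =>
        obtain ⟨n, hn⟩ := ti_dense_orbit hirr hd hℓ0 le_rfl hℓ1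
        refine ⟨n, fun s => ?_⟩
        rw [cLow_eq_PP]
        have := hPhiEq (Int.fract (dotA α n)) ℓ (Int.fract_nonneg _) (Int.fract_lt_one _)
          hℓ0 hℓ1 ?_
        · exact congrFun this s
        · intro s' hs'
          constructor
          · intro h
            by_contra hcon
            push_neg at hcon
            exact hne ⟨β s', Finset.mem_filter.mpr ⟨Finset.mem_image.mpr ⟨s', hs', rfl⟩, hcon⟩⟩
          · intro h
            linarith [hn.1]
  -- injectivity of Φ on L
  have hinj : Set.InjOn Φ ↑L := by
    intro a ha b hb hab
    have haL : a ∈ L := ha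
    have hbL : b ∈ L := hb
    obtain ⟨sa, hsa, rfl⟩ := Finset.mem_image.mp haL
    obtain ⟨sb, hsb, rfl⟩ := Finset.mem_image.mp hbL
    have h := hPhiGG _ _ (hβ0 sa) (hβ1 sa) (hβ0 sb) (hβ1 sb) hab
    have h1 : β sa ≤ β sb := (h sa hsa).mp le_rfl
    have h2 : β sb ≤ β sa := (h sb hsb).mpr le_rfl
    rw [le_antisymm h1 h2]
  -- counting
  have hcard1 : (langOn (cLow α) (Fintype.piFinset fun i => Finset.Ico (0 : ℤ) (m i))).ncard
      = L.card := by
    have := Set.ncard_image_of_injOn hinj; rw [Set.ncard_coe_finset] at this; rw [hlang]; exact this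
  have hcard2 : L.card = (setU m).card := by
    rw [hLdef]
    apply Finset.card_image_of_injOn
    intro s hs s' hs' h
    exact ti_fract_inj hirr h
  -- cardinality of setU
  have hdisj1 : Disjoint (boxB m) (Finset.univ.biUnion (faceF m)) := by
    rw [Finset.disjoint_left]
    intro s hsB hsF
    obtain ⟨i, -, hsi⟩ := Finset.mem_biUnion.mp hsF
    have h1 := (mem_boxB.mp hsB i).2
    have h2 := (mem_faceF.mp hsi).1
    omega
  have hcardU : (setU m).card = (∏ i, m i) + ∑ i, ∏ j, (if j = i then 1 else m j) := by
    rw [setU, Finset.card_union_of_disjoint hdisj1, Finset.card_biUnion ?_]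
    · congr 1
      · simp [boxB, Fintype.card_piFinset]
      · apply Finset.sum_congr rfl
        intro i _
        rw [faceF, Fintype.card_piFinset]
        apply Finset.prod_congr rfl
        intro j _
        split_ifs <;> simp
    · intro i _ j _ hij
      rw [Function.onFun, Finset.disjoint_left]
      intro s hsi hsj
      have h1 := (mem_faceF.mp hsi).1
      have h2 := (mem_faceF.mp hsj).2 i (by omega)
      omega
  rw [hcard1, hcard2, hcardU]
  -- final arithmetic
  push_cast
  rw [mul_add, mul_one, Finset.mul_sum]
  congr 1
  apply Finset.sum_congr rfl
  intro i _
  have hmi : (m i : ℚ) ≠ 0 := by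
    have := hm i; positivity
  have h1 : ∏ j, (if j = i then 1 else (m j : ℚ)) = ∏ j ∈ Finset.univ.erase i, (m j : ℚ) := by
    rw [← Finset.prod_erase Finset.univ (f := fun j => if j = i then 1 else (m j : ℚ))
      (a := i) (by simp)]
    apply Finset.prod_congr rfl
    intro j hj
    rw [if_neg (Finset.mem_erase.mp hj).1]
  have h2 : ∏ j, (m j : ℚ) = (m i : ℚ) * ∏ j ∈ Finset.univ.erase i, (m j : ℚ) :=
    (Finset.mul_prod_erase Finset.univ _ (Finset.mem_univ i)).symm
  rw [h1, h2]
  field_simp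
end
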